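/- arXiv:1708.06782 — 6 statements merged into one kernel-verified Lean document; each statement's English description precedes it below -/
import Mathlib

section
/- Let μ ≤ θ be infinite cardinals with μ regular. Then θ^{<μ} = cf([θ]^{<μ}, ⊆) · 2^{<μ}, where cf([θ]^{<μ}, ⊆) is the least cardinality of a cofinal family in the poset of subsets of θ of size less than μ ordered by inclusion, and θ^{<μ} = sup_{α<μ} θ^{|α|}. -/
/-!
A function `c → θ` with `c < μ` has range of size `< μ`, so it takes values in some member `t`
of a cofinal family `F`; hence `θ ^ c ≤ |F| · sup_t |t| ^ c`, and `|t| ^ c ≤ 2 ^ (|t| · c)` with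
`|t| · c < μ` because `μ` is infinite. This gives `θ^{<μ} ≤ cf · 2^{<μ}`. Conversely, the family
of all subsets of size `< μ` is cofinal and has at most `μ · θ^{<μ} = θ^{<μ}` members, while
`2^{<μ} ≤ θ^{<μ}`.
-/

open Cardinal Set

universe u

/-- The cofinality of the poset `([θ]^{<μ}, ⊆)`: the least cardinality of a family of
subsets of (a set of cardinality) `θ`, each of size `< μ`, such that every subset of size
`< μ` is contained in a member of the family. -/
noncomputable def smallSubsetCof (μ θ : Cardinal.{u}) : Cardinal.{u} :=
  sInf { c | ∃ F : Set (Set θ.out), (∀ s ∈ F, #s < μ) ∧ #F = c ∧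
    ∀ s : Set θ.out, #s < μ → ∃ t ∈ F, s ⊆ t }

namespace Cardinal

theorem le_powerlt_self (a : Cardinal.{u}) {b : Cardinal.{u}} (hb : 1 < b) : a ≤ a ^< b := by
  simpa using le_powerlt a hb

theorem powerlt_le_powerlt_right {a b : Cardinal.{u}} (c : Cardinal.{u}) (h : a ≤ b) :
    a ^< c ≤ b ^< c :=
  powerlt_le.2 fun _ hx => (power_le_power_right h).trans (le_powerlt b hx)

theorem power_le_two_powerlt {μ a c : Cardinal.{u}} (hμ : ℵ₀ ≤ μ) (ha : a < μ) (hc : c < μ) :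
    a ^ c ≤ 2 ^< μ :=
  calc a ^ c ≤ (2 ^ a) ^ c := power_le_power_right (cantor a).le
    _ = 2 ^ (a * c) := (power_mul ..).symm
    _ ≤ 2 ^< μ := le_powerlt 2 (mul_lt_of_lt hμ ha hc)

theorem mk_setOf_mk_lt_le (α : Type u) (μ : Cardinal.{u}) :
    #{s : Set α | #s < μ} ≤ μ * (max #α ℵ₀ ^< μ) := by
  have hcover : {s : Set α | #s < μ} ⊆ ⋃ o : Iio μ.ord, {s | #s ≤ o.1.card} := fun s hs =>
    mem_iUnion.2 ⟨⟨(#s).ord, ord_lt_ord.2 hs⟩, (card_ord (#s)).ge⟩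
  have hpiece : ∀ o : Iio μ.ord, #{s : Set α | #s ≤ o.1.card} ≤ max #α ℵ₀ ^< μ := fun o =>
    (mk_bounded_set_le α _).trans (le_powerlt _ (lt_ord.1 o.2))
  rw [← lift_le.{u + 1}, lift_mul]
  calc lift.{u + 1} #{s : Set α | #s < μ}
      ≤ lift.{u + 1} #(⋃ o : Iio μ.ord, {s : Set α | #s ≤ o.1.card}) :=
        lift_le.2 (mk_le_mk_of_subset hcover)
    _ ≤ lift.{u} #(Iio μ.ord) * ⨆ o : Iio μ.ord, lift.{u + 1} #{s : Set α | #s ≤ o.1.card} :=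
        mk_iUnion_le_lift _
    _ ≤ lift.{u + 1} μ * lift.{u + 1} (max #α ℵ₀ ^< μ) := by
        rw [mk_Iio_ordinal, card_ord, lift_lift]
        exact mul_le_mul_right (ciSup_le' fun o => lift_le.2 (hpiece o)) _

theorem power_le_mk_mul_iSup_of_forall_range_subset {α β : Type u} {F : Set (Set α)}
    (hF : ∀ f : β → α, ∃ t ∈ F, range f ⊆ t) :
    #α ^ #β ≤ #F * ⨆ t : F, #(t : Set α) ^ #β := by
  choose T hTF hT using hF
  let factor (f : β → α) : Σ t : F, β → (t : Set α) :=
    ⟨⟨T f, hTF f⟩, fun b => ⟨f b, hT f (mem_range_self b)⟩⟩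
  have hfactor : Function.Injective factor := fun f g h =>
    funext fun b => congrArg (fun p : Σ t : F, β → (t : Set α) => (p.2 b : α)) h
  calc #α ^ #β = #(β → α) := power_def α β
    _ ≤ #(Σ t : F, β → (t : Set α)) := mk_le_of_injective hfactor
    _ = sum fun t : F => #(t : Set α) ^ #β := by simp only [mk_sigma, power_def]
    _ ≤ #F * ⨆ t : F, #(t : Set α) ^ #β := sum_le_mk_mul_iSup _

end Cardinal

theorem exists_cofinal_family_mk_eq_smallSubsetCof (μ θ : Cardinal.{u}) :
    ∃ F : Set (Set θ.out), (∀ s ∈ F, #s < μ) ∧ #F = smallSubsetCof μ θ ∧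
      ∀ s : Set θ.out, #s < μ → ∃ t ∈ F, s ⊆ t :=
  csInf_mem (s := {c | ∃ F : Set (Set θ.out), (∀ s ∈ F, #s < μ) ∧ #F = c ∧
    ∀ s : Set θ.out, #s < μ → ∃ t ∈ F, s ⊆ t })
    ⟨_, {s | #s < μ}, fun _ hs => hs, rfl, fun s hs => ⟨s, hs, subset_rfl⟩⟩

theorem powerlt_le_smallSubsetCof_mul_two_powerlt {μ : Cardinal.{u}} (θ : Cardinal.{u})
    (hμ : ℵ₀ ≤ μ) : θ ^< μ ≤ smallSubsetCof μ θ * 2 ^< μ := by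
  obtain ⟨F, hF_small, hF_card, hF_cofinal⟩ := exists_cofinal_family_mk_eq_smallSubsetCof μ θ
  refine powerlt_le.2 fun c hc => ?_
  calc θ ^ c = #θ.out ^ #c.out := by rw [mk_out, mk_out]
    _ ≤ #F * ⨆ t : F, #(t : Set θ.out) ^ #c.out :=
      power_le_mk_mul_iSup_of_forall_range_subset fun f =>
        hF_cofinal _ (mk_range_le.trans_lt (by rwa [mk_out]))
    _ ≤ smallSubsetCof μ θ * 2 ^< μ := by
      rw [← hF_card, mk_out]
      exact mul_le_mul_right (ciSup_le' fun t : F => power_le_two_powerlt hμ (hF_small t t.2) hc) _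

theorem smallSubsetCof_le_powerlt {μ θ : Cardinal.{u}} (hμ : 1 < μ) (hθ : ℵ₀ ≤ θ) (hμθ : μ ≤ θ) :
    smallSubsetCof μ θ ≤ θ ^< μ := by
  obtain ⟨F, hF_small, hF_card, -⟩ := exists_cofinal_family_mk_eq_smallSubsetCof μ θ
  have hθ_le : θ ≤ θ ^< μ := le_powerlt_self θ hμ
  calc smallSubsetCof μ θ = #F := hF_card.symm
    _ ≤ #{s : Set θ.out | #s < μ} := mk_le_mk_of_subset hF_small
    _ ≤ μ * (θ ^< μ) := by simpa [mk_out, hθ] using mk_setOf_mk_lt_le θ.out μ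
    _ ≤ θ ^< μ := (mul_le_max_of_aleph0_le_right (hθ.trans hθ_le)).trans
      (max_le (hμθ.trans hθ_le) le_rfl)

/-- For `μ ≤ θ` infinite with `μ` regular, `θ^{<μ} = cf([θ]^{<μ}, ⊆) · 2^{<μ}`. -/
theorem stmt0 (μ θ : Cardinal.{u}) (hμ : μ.IsRegular) (hθ : ℵ₀ ≤ θ) (hμθ : μ ≤ θ) :
    θ ^< μ = smallSubsetCof μ θ * (2 ^< μ) := by
  have hμ₁ : 1 < μ := one_lt_aleph0.trans_le hμ.aleph0_le
  refine le_antisymm (powerlt_le_smallSubsetCof_mul_two_powerlt θ hμ.aleph0_le) ?_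
  calc smallSubsetCof μ θ * 2 ^< μ ≤ θ ^< μ * θ ^< μ :=
        mul_le_mul' (smallSubsetCof_le_powerlt hμ₁ hθ hμθ)
          (powerlt_le_powerlt_right μ ((natCast_lt_aleph0 (n := 2)).le.trans hθ))
    _ = θ ^< μ := mul_eq_self (hθ.trans (le_powerlt_self θ hμ₁))
end

section
/- Let μ ≤ λ be infinite cardinals with μ regular and cf(λ) < μ. Then λ^{<μ} is the least almost μ-closed cardinal λ' strictly greater than λ. -/
/-!
By König's theorem `λ < λ^{cf λ}`, and `cf λ < μ` makes `λ^{cf λ}` one of the powers bounded by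
`λ^{<μ}`. Every `θ < λ^{<μ}` lies below some `λ^κ₀` with `κ₀ < μ`, so for `κ < μ` we get
`θ^κ ≤ λ^{κ₀ κ}` with `κ₀ κ < μ`; this makes `λ^{<μ}` almost `μ`-closed. Minimality is the
closure condition at `θ = λ`.
-/

open Cardinal

universe u

/-- A cardinal `ν` is almost `μ`-closed if `θ^{<μ} ≤ ν` for all `θ < ν`. -/
def AlmostMuClosed (μ ν : Cardinal.{u}) : Prop := ∀ θ < ν, θ ^< μ ≤ ν

namespace Cardinal

theorem exists_lt_power_of_lt_powerlt {θ a b : Cardinal.{u}} (h : θ < a ^< b) :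
    ∃ c < b, θ < a ^ c := by
  by_contra! h'
  exact h.not_ge (powerlt_le.2 h')

theorem lt_powerlt_of_cof_ord_lt {a b : Cardinal.{u}} (ha : ℵ₀ ≤ a) (hb : a.ord.cof < b) :
    a < a ^< b :=
  (lt_power_cof_ord ha).trans_le (le_powerlt a hb)

theorem powerlt_le_powerlt_of_lt_powerlt {θ a b : Cardinal.{u}} (hb : ℵ₀ ≤ b)
    (hθ : θ < a ^< b) : θ ^< b ≤ a ^< b := by
  obtain ⟨c, hc, hθc⟩ := exists_lt_power_of_lt_powerlt hθ
  refine powerlt_le.2 fun d hd => ?_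
  calc θ ^ d ≤ (a ^ c) ^ d := power_le_power_right hθc.le
    _ = a ^ (c * d) := (power_mul ..).symm
    _ ≤ a ^< b := le_powerlt a (mul_lt_of_lt hb hc hd)

end Cardinal

theorem almostMuClosed_powerlt {μ : Cardinal.{u}} (hμ : ℵ₀ ≤ μ) (l : Cardinal.{u}) :
    AlmostMuClosed μ (l ^< μ) :=
  fun _ hθ => powerlt_le_powerlt_of_lt_powerlt hμ hθ

theorem stmt4_general (μ l : Cardinal.{u}) (hμ : μ.IsRegular) (hl : ℵ₀ ≤ l)
    (hcf : l.ord.cof < μ) :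
    IsLeast { l' : Cardinal.{u} | l < l' ∧ AlmostMuClosed μ l' } (l ^< μ) :=
  ⟨⟨lt_powerlt_of_cof_ord_lt hl hcf, almostMuClosed_powerlt hμ.aleph0_le l⟩,
    fun _ ⟨hll', hclosed⟩ => hclosed l hll'⟩

/-- If `μ ≤ λ` are infinite, `μ` regular, and `cf(λ) < μ`, then `λ^{<μ}` is the least
almost `μ`-closed cardinal strictly greater than `λ`. -/
theorem stmt4 (μ l : Cardinal.{u}) (hμ : μ.IsRegular) (hl : ℵ₀ ≤ l) (hμl : μ ≤ l)
    (hcf : l.ord.cof < μ) :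
    IsLeast { l' : Cardinal.{u} | l < l' ∧ AlmostMuClosed μ l' } (l ^< μ) :=
  stmt4_general μ l hμ hl hcf
end

section
/- Let μ ≤ λ be infinite cardinals with μ regular. If both λ and λ⁺ are almost μ-closed, then λ^{<μ} = λ when cf(λ) ≥ μ, and λ^{<μ} = λ⁺ when cf(λ) < μ. -/
/-!
If `κ < cf λ`, every function `κ → λ` is bounded below `λ`, so `λ^κ ≤ ∑_{θ < λ} θ^κ ≤ λ · λ = λ`
once `θ^κ ≤ λ` for all `θ < λ`, which almost `μ`-closedness of `λ` provides for `κ < μ ≤ cf λ`.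
If instead `cf λ < μ`, König's theorem gives `λ < λ^{cf λ} ≤ λ^{<μ}`, while almost `μ`-closedness of
`λ⁺` applied to `θ = λ` gives `λ^{<μ} ≤ λ⁺`.
-/

open Cardinal

universe u

namespace Cardinal

theorem exists_forall_lt_of_mk_lt_cof {α ι : Type u} [LinearOrder α] (h : #ι < Order.cof α)
    (f : ι → α) : ∃ b, ∀ i, f i < b := by
  have : ¬IsCofinal (Set.range f) := fun hf => (Order.cof_le hf).not_gt (mk_range_le.trans_lt h)
  obtain ⟨b, hb⟩ := not_isCofinal_iff.1 this
  exact ⟨b, fun i => hb _ (Set.mem_range_self i)⟩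

theorem mk_pi_le_sum_of_lt_cof {α ι : Type u} [LinearOrder α] (h : #ι < Order.cof α) :
    #(ι → α) ≤ sum fun b : α => #(ι → Set.Iio b) := by
  have hcover : ⋃ b : α, {f : ι → α | ∀ i, f i < b} = Set.univ :=
    Set.eq_univ_of_forall fun f => Set.mem_iUnion.2 (exists_forall_lt_of_mk_lt_cof h f)
  calc #(ι → α) = #(⋃ b : α, {f : ι → α | ∀ i, f i < b}) := by rw [hcover, mk_univ]
    _ ≤ sum fun b => #{f : ι → α | ∀ i, f i < b} := mk_iUnion_le_sum_mk
    _ = sum fun b => #(ι → Set.Iio b) :=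
      congrArg sum (funext fun _ => mk_congr (Equiv.subtypePiEquivPi (p := fun _ a => a < _)))

theorem power_le_of_lt_cof {l κ : Cardinal.{u}} (hl : ℵ₀ ≤ l) (hκ : κ < l.ord.cof)
    (h : ∀ θ < l, θ ^ κ ≤ l) : l ^ κ ≤ l := by
  induction l using Cardinal.inductionOn with | mk α
  induction κ using Cardinal.inductionOn with | mk ι
  obtain ⟨_, _, hα⟩ := exists_ord_eq_type_lt α
  rw [hα, Ordinal.cof_type] at hκ
  calc #α ^ #ι = #(ι → α) := power_def α ι
    _ ≤ sum fun b : α => #(ι → Set.Iio b) := mk_pi_le_sum_of_lt_cof hκ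
    _ ≤ sum fun _ : α => #α :=
      sum_le_sum _ _ fun b => (power_def _ _).symm.trans_le (h _ (mk_Iio_lt b hα))
    _ = #α := by rw [sum_const', mul_eq_self hl]

end Cardinal

theorem AlmostMuClosed.powerlt_le_of_le_cof {μ l : Cardinal.{u}} (h : AlmostMuClosed μ l)
    (hl : ℵ₀ ≤ l) (hcof : μ ≤ l.ord.cof) : l ^< μ ≤ l :=
  powerlt_le.2 fun _ hκ =>
    power_le_of_lt_cof hl (hκ.trans_le hcof) fun θ hθ => (le_powerlt θ hκ).trans (h θ hθ)

theorem stmt5_general (μ l : Cardinal.{u}) (hμ : μ.IsRegular) (hl : ℵ₀ ≤ l)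
    (h1 : AlmostMuClosed μ l) (h2 : AlmostMuClosed μ (Order.succ l)) :
    (μ ≤ l.ord.cof → l ^< μ = l) ∧ (l.ord.cof < μ → l ^< μ = Order.succ l) := by
  constructor
  · intro hcof
    have hl_le : l ≤ l ^< μ := by
      simpa using le_powerlt l (one_lt_aleph0.trans_le hμ.aleph0_le)
    exact le_antisymm (h1.powerlt_le_of_le_cof hl hcof) hl_le
  · intro hcof
    have hl_lt : l < l ^< μ := (lt_power_cof_ord hl).trans_le (le_powerlt l hcof)
    exact le_antisymm (h2 l (Order.lt_succ l)) (Order.succ_le_of_lt hl_lt)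

/-- If `μ ≤ λ` are infinite, `μ` regular, and both `λ` and `λ⁺` are almost `μ`-closed,
then `λ^{<μ} = λ` when `cf(λ) ≥ μ` and `λ^{<μ} = λ⁺` when `cf(λ) < μ`. -/
theorem stmt5 (μ l : Cardinal.{u}) (hμ : μ.IsRegular) (hl : ℵ₀ ≤ l) (hμl : μ ≤ l)
    (h1 : AlmostMuClosed μ l) (h2 : AlmostMuClosed μ (Order.succ l)) :
    (μ ≤ l.ord.cof → l ^< μ = l) ∧ (l.ord.cof < μ → l ^< μ = Order.succ l) :=
  stmt5_general μ l hμ hl h1 h2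
end

section
/- Let μ, λ' be regular cardinals with μ ≤ λ'. Let C be a category with μ-directed colimits and let M be the colimit of a μ-directed diagram indexed by a poset I with |I| < λ', all of whose objects are λ'-presentable. Then M is λ'-presentable. -/
/-!
Let `Hom(M, -)` be applied to a `λ'`-directed colimit `s` of `F : J ⥤ C`. Since `J` is filtered,
it suffices to show that every map `M ⟶ s.pt` factors through some `F j`, and that two maps
`M ⟶ F j` agreeing in `s.pt` already agree at some later stage. For each of the fewer than `λ'`
objects `D i` both facts hold by presentability, and `λ'`-directedness of `J` bounds the fewer than
`λ'` stages involved. For factorization, one further bound makes the factorizations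
`D i ⟶ F b` compatible along the fewer than `λ'` arrows `i ≤ i'` of `I`, so that they form a
cocone on `D` and glue through `M`.
-/

open Cardinal CategoryTheory CategoryTheory.Limits Opposite

universe v u

/-- A preorder is `μ`-directed if every subset of cardinality `< μ` has an upper bound. -/
def IsMuDirected (μ : Cardinal.{v}) (J : Type v) [Preorder J] : Prop :=
  ∀ S : Set J, #S < μ → ∃ b, ∀ j ∈ S, j ≤ b

/-- An object `M` is `μ`-presentable if its hom-functor `Hom(M, -)` preserves colimits of
all `μ`-directed diagrams. -/
def IsMuPresentable (μ : Cardinal.{v}) {C : Type u} [Category.{v} C] (M : C) : Prop :=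
  ∀ (J : Type v) [Preorder J], IsMuDirected μ J →
    Nonempty (PreservesColimitsOfShape J (coyoneda.obj (op M)))

namespace IsMuDirected

variable {κ : Cardinal.{v}} {J : Type v} [Preorder J]

theorem exists_forall_le (hJ : IsMuDirected κ J) {α : Type v} (hα : #α < κ) (f : α → J) :
    ∃ b, ∀ a, f a ≤ b := by
  obtain ⟨b, hb⟩ := hJ (Set.range f) (mk_range_le.trans_lt hα)
  exact ⟨b, fun a => hb _ ⟨a, rfl⟩⟩

theorem isDirectedOrder (hJ : IsMuDirected κ J) (hκ : ℵ₀ ≤ κ) : IsDirectedOrder J where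
  directed a b := by
    obtain ⟨c, hc⟩ := hJ {a, b} ((Set.toFinite _).lt_aleph0.trans_le hκ)
    exact ⟨c, hc a (by simp), hc b (by simp)⟩

end IsMuDirected

section PresentableColimit

variable {C : Type u} [Category.{v} C] {κ : Cardinal.{v}} {J : Type v} [Preorder J]
  {F : J ⥤ C} {s : Cocone F}

theorem exists_hom_forall_comp_map_eq [IsDirectedOrder J] (hJ : IsMuDirected κ J)
    {α : Type v} (hα : #α < κ) {X : α → C}
    (hX : ∀ a, IsColimit ((coyoneda.obj (op (X a))).mapCocone s)) {j : J}
    (u v : ∀ a, X a ⟶ F.obj j) (huv : ∀ a, u a ≫ s.ι.app j = v a ≫ s.ι.app j) :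
    ∃ (k : J) (e : j ⟶ k), ∀ a, u a ≫ F.map e = v a ≫ F.map e := by
  choose k e he using fun a =>
    (Types.FilteredColimit.isColimit_eq_iff' (hX a) (u a) (v a)).1 (huv a)
  obtain ⟨b, hb⟩ := hJ.exists_forall_le hα k
  obtain ⟨z, hjz, hbz⟩ := exists_ge_ge j b
  refine ⟨z, homOfLE hjz, fun a => ?_⟩
  have hfactor : homOfLE hjz = e a ≫ homOfLE ((hb a).trans hbz) := Subsingleton.elim _ _
  have hea : u a ≫ F.map (e a) = v a ≫ F.map (e a) := he a
  rw [hfactor, F.map_comp, reassoc_of% hea]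

variable {I : Type v} [Preorder I] {D : I ⥤ C} {c : Cocone D}

theorem exists_comp_eq_of_isColimit (hc : IsColimit c) (hJ : IsMuDirected κ J)
    (hκ : ℵ₀ ≤ κ) (hI : #I < κ)
    (hD : ∀ i, IsColimit ((coyoneda.obj (op (D.obj i))).mapCocone s))
    (f : c.pt ⟶ s.pt) : ∃ (j : J) (g : c.pt ⟶ F.obj j), g ≫ s.ι.app j = f := by
  have := hJ.isDirectedOrder hκ
  choose j₀ g hg using fun i => Types.jointly_surjective _ (hD i) (c.ι.app i ≫ f)
  obtain ⟨b, hb⟩ := hJ.exists_forall_le hI j₀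
  let h (i : I) : D.obj i ⟶ F.obj b := g i ≫ F.map (homOfLE (hb i))
  have hh (i : I) : h i ≫ s.ι.app b = c.ι.app i ≫ f := by
    simp only [h, Category.assoc, s.w]
    exact hg i
  have harrows : #{p : I × I // p.1 ≤ p.2} < κ :=
    (mk_subtype_le _).trans_lt (by simpa using mul_lt_of_lt hκ hI hI)
  obtain ⟨k, e, he⟩ := exists_hom_forall_comp_map_eq hJ harrows (fun p => hD p.1.1)
    (fun p => D.map (homOfLE p.2) ≫ h p.1.2) (fun p => h p.1.1)
    (fun p => by simp only [Category.assoc, hh, c.w_assoc])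
  let E : Cocone D :=
    { pt := F.obj k
      ι :=
        { app i := h i ≫ F.map e
          naturality i i' φ := by
            simpa [show φ = homOfLE (leOfHom φ) from rfl] using he ⟨(i, i'), leOfHom φ⟩ } }
  refine ⟨k, hc.desc E, hc.hom_ext fun i => ?_⟩
  rw [hc.fac_assoc]
  simp only [E, Category.assoc, s.w, hh]

theorem exists_hom_comp_map_eq_of_isColimit (hc : IsColimit c) (hJ : IsMuDirected κ J)
    (hκ : ℵ₀ ≤ κ) (hI : #I < κ)
    (hD : ∀ i, IsColimit ((coyoneda.obj (op (D.obj i))).mapCocone s)) {j : J}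
    (g₁ g₂ : c.pt ⟶ F.obj j) (hg : g₁ ≫ s.ι.app j = g₂ ≫ s.ι.app j) :
    ∃ (k : J) (e : j ⟶ k), g₁ ≫ F.map e = g₂ ≫ F.map e := by
  have := hJ.isDirectedOrder hκ
  obtain ⟨k, e, he⟩ := exists_hom_forall_comp_map_eq hJ hI hD (fun i => c.ι.app i ≫ g₁)
    (fun i => c.ι.app i ≫ g₂) (fun i => by simp only [Category.assoc, hg])
  exact ⟨k, e, hc.hom_ext fun i => by simpa using he i⟩

theorem isMuPresentable_of_isColimit (hκ : ℵ₀ ≤ κ) (hI : #I < κ) (hc : IsColimit c)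
    (hD : ∀ i, IsMuPresentable κ (D.obj i)) : IsMuPresentable κ c.pt := by
  intro J _ hJ
  have := hJ.isDirectedOrder hκ
  refine ⟨⟨fun {F} => ⟨fun {s} hs => ⟨?_⟩⟩⟩⟩
  have hDs (i : I) : IsColimit ((coyoneda.obj (op (D.obj i))).mapCocone s) :=
    haveI := (hD i J hJ).some
    isColimitOfPreserves _ hs
  refine Types.FilteredColimit.isColimitOf' _ _ (fun f => ?_) (fun j g₁ g₂ hg => ?_)
  · obtain ⟨j, g, hg⟩ := exists_comp_eq_of_isColimit hc hJ hκ hI hDs f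
    exact ⟨j, g, hg.symm⟩
  · exact exists_hom_comp_map_eq_of_isColimit hc hJ hκ hI hDs g₁ g₂ hg

end PresentableColimit

theorem stmt11_general {C : Type u} [Category.{v} C] (l : Cardinal.{v})
    (hl : l.IsRegular)
    (I : Type v) [PartialOrder I] (hIcard : #I < l)
    (D : I ⥤ C) (c : Cocone D) (hc : IsColimit c)
    (hobj : ∀ i : I, IsMuPresentable l (D.obj i)) :
    IsMuPresentable l c.pt :=
  isMuPresentable_of_isColimit hl.aleph0_le hIcard hc hobj

/-- Let `μ ≤ λ'` be regular, `C` a category with `μ`-directed colimits, and `M` the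
colimit of a `μ`-directed diagram indexed by a poset `I` with `|I| < λ'` all of whose
objects are `λ'-presentable`. Then `M` is `λ'`-presentable. -/
theorem stmt11 {C : Type u} [Category.{v} C] (μ l : Cardinal.{v})
    (hμ : μ.IsRegular) (hl : l.IsRegular) (hμl : μ ≤ l)
    (hC : ∀ (J : Type v) [Preorder J], IsMuDirected μ J → HasColimitsOfShape J C)
    (I : Type v) [PartialOrder I] (hI : IsMuDirected μ I) (hIcard : #I < l)
    (D : I ⥤ C) (c : Cocone D) (hc : IsColimit c)
    (hobj : ∀ i : I, IsMuPresentable l (D.obj i)) :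
    IsMuPresentable l c.pt :=
  stmt11_general l hl I hIcard D c hc hobj
end

section
/- For every infinite ordinal α, the constructible level L_α has cardinality |α|. -/
/-! Every level is small and transitive, so `L` is increasing and the `ZFSet` whose elements are
those of `L γ` lies in `L (γ + 1) \ L γ`; these witnesses inject `α` into `L α`. Conversely, a
definable subset of `X` is fixed by a formula with parameters in `X`, and there are at most
`max ℵ₀ |X|` of those; hence `|L β| ≤ max ℵ₀ |β|` by induction, a limit level being a union of
`|β|` levels of size at most `max ℵ₀ |β|`. -/

open Cardinal FirstOrder

universe u

/-- The definable power set operation: `y ∈ DefSets X` iff `y` is a `ZFSet` all of whose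
elements lie in `X`, and the corresponding subset of `X` is first-order definable (with
parameters) in the structure `(X, ∈)`. -/
def DefSets (X : Set ZFSet.{u}) : Set ZFSet.{u} :=
  letI : LE ↥X := ⟨fun a b => (a : ZFSet) ∈ (b : ZFSet)⟩
  letI : Language.order.Structure ↥X := Language.orderStructure ↥X
  { y | (∀ z : ZFSet, z ∈ y → z ∈ X) ∧
    Set.Definable₁ (Set.univ : Set ↥X) Language.order { z : ↥X | (z : ZFSet) ∈ y } }

universe v w x y

theorem FirstOrder.Language.Formula.card_le {L : Language.{v, w}} {α : Type x} :
    #(L.Formula α) ≤ max ℵ₀ (lift.{max v w} #α + lift.{x} L.card) :=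
  (mk_le_of_injective (f := fun φ : L.Formula α => (⟨0, φ⟩ : Σ n, L.BoundedFormula α n))
    fun _ _ h => by simpa using h).trans Language.BoundedFormula.card_le

theorem Set.lift_mk_definable_le {L : FirstOrder.Language.{v, w}} {M : Type x} [L.Structure M]
    (A : Set M) (α : Type y) :
    lift.{max v w} #{s : Set (α → M) // A.Definable L s} ≤ lift.{max x y} #(L[[A]].Formula α) := by
  have hφ (s : {s : Set (α → M) // A.Definable L s}) :
      ∃ φ : L[[A]].Formula α, s.1 = Set.ofPred φ.Realize :=
    s.2
  rw [← lift_umax]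
  exact lift_mk_le'.2 ⟨⟨fun s => (hφ s).choose, fun s t h => Subtype.ext <| by
    rw [(hφ s).choose_spec, (hφ t).choose_spec, show (hφ s).choose = (hφ t).choose from h]⟩⟩

theorem ZFSet.exists_coe_eq_of_small (X : Set ZFSet.{u}) [Small.{u} X] :
    ∃ x : ZFSet.{u}, (x : Set ZFSet.{u}) = X :=
  (coeEquiv.surjective ⟨X, ‹_›⟩).imp fun _ hx => congrArg Subtype.val hx

/-- `(X, ∈)` as a structure for the language of orders (`≤` is read as `∈`), as in `DefSets`. -/
abbrev memStructure (X : Set ZFSet.{u}) : Language.order.Structure X :=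
  @Language.orderStructure X ⟨fun a b => (a : ZFSet) ∈ (b : ZFSet)⟩

def IsTransitiveClass (X : Set ZFSet.{u}) : Prop :=
  ∀ y ∈ X, (y : Set ZFSet.{u}) ⊆ X

section DefSets

attribute [local instance] memStructure

variable {X : Set ZFSet.{u}} {x y : ZFSet.{u}}

theorem mem_defSets_iff :
    y ∈ DefSets X ↔
      (y : Set ZFSet.{u}) ⊆ X ∧ Set.univ.Definable₁ Language.order {z : X | (z : ZFSet) ∈ y} :=
  Iff.rfl

theorem coe_subset_of_mem_defSets (hy : y ∈ DefSets X) : (y : Set ZFSet.{u}) ⊆ X :=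
  (mem_defSets_iff.1 hy).1

theorem definable₁_mem_of_mem (hy : y ∈ X) :
    Set.univ.Definable₁ Language.order {z : X | (z : ZFSet) ∈ y} := by
  rw [Set.Definable₁, Set.definable_iff_exists_formula_sum]
  -- the formula `v₀ ≤ y` with the parameter `y`, which `(X, ∈)` reads as `v₀ ∈ y`
  refine ⟨Language.Term.le (Language.Term.var (Sum.inl (Sum.inr 0)))
    (Language.Term.var (Sum.inl (Sum.inl ⟨⟨y, hy⟩, Set.mem_univ _⟩))), ?_⟩
  ext v
  exact Iff.rfl

theorem IsTransitiveClass.subset_defSets (hX : IsTransitiveClass X) : X ⊆ DefSets X :=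
  fun _ hy => mem_defSets_iff.2 ⟨hX _ hy, definable₁_mem_of_mem hy⟩

theorem IsTransitiveClass.defSets (hX : IsTransitiveClass X) : IsTransitiveClass (DefSets X) :=
  fun _ hy => (coe_subset_of_mem_defSets hy).trans hX.subset_defSets

theorem mem_defSets_of_coe_eq (hx : (x : Set ZFSet.{u}) = X) : x ∈ DefSets X := by
  refine mem_defSets_iff.2 ⟨hx.le, ?_⟩
  have hall : {z : X | (z : ZFSet) ∈ x} = Set.univ :=
    Set.eq_univ_of_forall fun z => hx.ge z.2
  simp [Set.Definable₁, hall]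

theorem exists_mem_defSets_notMem [Small.{u} X] : ∃ x ∈ DefSets X, x ∉ X := by
  obtain ⟨x, hx⟩ := ZFSet.exists_coe_eq_of_small X
  exact ⟨x, mem_defSets_of_coe_eq hx, fun h => ZFSet.mem_irrefl x (hx.ge h)⟩

theorem small_defSets [Small.{u} X] : Small.{u} (DefSets X) := by
  obtain ⟨x, hx⟩ := ZFSet.exists_coe_eq_of_small X
  have := x.powerset.small_coe
  refine small_subset (s := (x.powerset : Set ZFSet.{u})) fun y hy => ?_
  exact ZFSet.mem_powerset.2 fun z hz => hx.ge (coe_subset_of_mem_defSets hy hz)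

theorem mk_defSets_le : #(DefSets X) ≤ max ℵ₀ #X := by
  let toDefinable (y : DefSets X) :
      {s : Set (Fin 1 → X) // Set.univ.Definable Language.order s} :=
    ⟨{v | (v 0 : ZFSet) ∈ (y : ZFSet)}, (mem_defSets_iff.1 y.2).2⟩
  have hinj : Function.Injective toDefinable := fun y₁ y₂ h => by
    have hmem (z : X) : (z : ZFSet) ∈ (y₁ : ZFSet) ↔ (z : ZFSet) ∈ (y₂ : ZFSet) :=
      Set.ext_iff.1 (congrArg Subtype.val h) fun _ => z
    exact Subtype.ext <| ZFSet.ext fun w =>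
      ⟨fun hw => (hmem ⟨w, coe_subset_of_mem_defSets y₁.2 hw⟩).1 hw,
        fun hw => (hmem ⟨w, coe_subset_of_mem_defSets y₂.2 hw⟩).2 hw⟩
  have hdef := Set.lift_mk_definable_le (L := Language.order) (Set.univ : Set X) (Fin 1)
  have hform := Language.Formula.card_le (L := Language.order[[(Set.univ : Set X)]]) (α := Fin 1)
  simp only [lift_id, lift_uzero] at hdef
  simp only [Language.card_withConstants, Language.order.card_eq_one, mk_univ, mk_fintype,
    Fintype.card_fin, Nat.cast_one, lift_one, lift_uzero] at hform
  have hℵ₀ : ℵ₀ ≤ max ℵ₀ #X := le_max_left _ _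
  have hone : 1 ≤ max ℵ₀ #X := one_le_aleph0.trans hℵ₀
  calc #(DefSets X) ≤ #{s : Set (Fin 1 → X) // Set.univ.Definable Language.order s} :=
        mk_le_of_injective hinj
    _ ≤ max ℵ₀ (1 + (1 + #X)) := hdef.trans hform
    _ ≤ max ℵ₀ #X := max_le hℵ₀ <|
        add_le_of_le hℵ₀ hone (add_le_of_le hℵ₀ hone (le_max_right _ _))

end DefSets

structure IsConstructibleHierarchy (L : Ordinal.{u} → Set ZFSet.{u}) : Prop where
  zero : L 0 = ∅
  add_one : ∀ α, L (α + 1) = DefSets (L α)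
  limit : ∀ β, Order.IsSuccLimit β → L β = ⋃ α ∈ Set.Iio β, L α

namespace IsConstructibleHierarchy

variable {L : Ordinal.{u} → Set ZFSet.{u}}

theorem isTransitiveClass (hL : IsConstructibleHierarchy L) (β : Ordinal.{u}) :
    IsTransitiveClass (L β) := by
  induction β using Ordinal.limitRecOn with
  | zero => simp [hL.zero, IsTransitiveClass]
  | add_one γ ih => rw [hL.add_one]; exact ih.defSets
  | limit β hβ ih =>
    rw [hL.limit β hβ]
    intro y hy
    obtain ⟨γ, hγ, hyγ⟩ := Set.mem_iUnion₂.1 hy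
    exact (ih γ hγ y hyγ).trans (Set.subset_biUnion_of_mem hγ)

theorem subset_add_one (hL : IsConstructibleHierarchy L) (β : Ordinal.{u}) :
    L β ⊆ L (β + 1) :=
  hL.add_one β ▸ (hL.isTransitiveClass β).subset_defSets

theorem monotone (hL : IsConstructibleHierarchy L) : Monotone L := by
  intro γ δ hγδ
  induction δ using Ordinal.limitRecOn with
  | zero => rw [nonpos_iff_eq_zero.1 hγδ]
  | add_one δ ih =>
    rcases hγδ.lt_or_eq with hlt | rfl
    · exact (ih (Order.lt_add_one_iff.1 hlt)).trans (hL.subset_add_one δ)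
    · exact subset_rfl
  | limit δ hδ _ =>
    rcases hγδ.lt_or_eq with hlt | rfl
    · rw [hL.limit δ hδ]; exact Set.subset_biUnion_of_mem (u := L) hlt
    · exact subset_rfl

theorem small (hL : IsConstructibleHierarchy L) (β : Ordinal.{u}) : Small.{u} (L β) := by
  induction β using Ordinal.limitRecOn with
  | zero => rw [hL.zero]; infer_instance
  | add_one γ ih => rw [hL.add_one]; exact small_defSets
  | limit β hβ ih =>
    rw [hL.limit β hβ]
    exact @small_biUnion _ _ (Set.Iio β) _ (fun γ _ => L γ) ih

theorem lift_card_le_mk (hL : IsConstructibleHierarchy L) (α : Ordinal.{u}) :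
    lift.{u + 1} α.card ≤ #(L α) := by
  have hnew (γ : Ordinal.{u}) : ∃ x ∈ L (γ + 1), x ∉ L γ := by
    have := hL.small γ
    rw [hL.add_one]
    exact exists_mem_defSets_notMem
  choose x hx_mem hx_notMem using hnew
  have hx_lt {γ δ : Ordinal.{u}} (h : γ < δ) : x γ ∈ L δ :=
    hL.monotone (Order.add_one_le_iff.2 h) (hx_mem γ)
  rw [← mk_Iio_ordinal]
  refine mk_le_of_injective (f := fun γ : Set.Iio α => ⟨x γ, hx_lt γ.2⟩) ?_
  refine Function.Injective.of_lt_imp_ne fun γ δ h hx => hx_notMem δ ?_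
  have hx : x γ = x δ := congrArg Subtype.val hx
  exact hx ▸ hx_lt h

theorem mk_le_max (hL : IsConstructibleHierarchy L) (β : Ordinal.{u}) :
    #(L β) ≤ max ℵ₀ (lift.{u + 1} β.card) := by
  induction β using Ordinal.limitRecOn with
  | zero => simp [hL.zero]
  | add_one γ ih =>
    rw [hL.add_one]
    refine mk_defSets_le.trans (max_le (le_max_left _ _) (ih.trans ?_))
    exact max_le_max le_rfl (lift_le.2 (Ordinal.card_le_card le_self_add))
  | limit β hβ ih =>
    rw [hL.limit β hβ]
    refine mk_biUnion_le_of_le_lift ?_ (le_max_left _ _) L fun γ hγ => (ih γ hγ).trans ?_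
    · simp
    · exact max_le_max le_rfl (lift_le.2 (Ordinal.card_le_card hγ.le))

end IsConstructibleHierarchy

/-- For every infinite ordinal `α`, the constructible level `L_α` has cardinality `|α|`.
Here the constructible hierarchy is any function `L` on ordinals satisfying the defining
recursion: `L 0 = ∅`, `L (α+1) = Def(L α)`, and `L β = ⋃_{α<β} L α` at limits. -/
theorem stmt12 (L : Ordinal.{u} → Set ZFSet.{u})
    (h0 : L 0 = ∅)
    (hsucc : ∀ α : Ordinal.{u}, L (α + 1) = DefSets (L α))
    (hlim : ∀ β : Ordinal.{u}, Order.IsSuccLimit β → L β = ⋃ α ∈ Set.Iio β, L α)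
    (α : Ordinal.{u}) (hα : Ordinal.omega0 ≤ α) :
    #(L α) = Cardinal.lift.{u + 1} α.card := by
  have hL : IsConstructibleHierarchy L := ⟨h0, hsucc, hlim⟩
  have hℵ₀ : ℵ₀ ≤ lift.{u + 1} α.card := aleph0_le_lift.2 (Ordinal.aleph0_le_card.2 hα)
  exact ((hL.mk_le_max α).trans_eq (max_eq_right hℵ₀)).antisymm (hL.lift_card_le_mk α)
end

section
/- If every uncountable cardinal is inaccessible in L, then there is no singular cardinal λ such that (λ⁺)^L = λ⁺ holds with λ⁺ a successor cardinal in L. -/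
open Cardinal

universe u

/-- If every uncountable cardinal is inaccessible in `L` (so in particular every
uncountable cardinal is a limit cardinal of `L`, as witnessed by `hLimit`), then for no
infinite singular cardinal `λ` can the successor of `λ` computed in `L` (i.e. the least
`L`-cardinal above `λ`) equal the true successor `λ⁺`. Here `LCard ν` abstracts the
statement "the ordinal `ν` is a cardinal in `L`" and `LInacc κ` abstracts "`κ` is
inaccessible in `L`". -/
theorem stmt18 (LCard : Ordinal.{u} → Prop) (LInacc : Ordinal.{u} → Prop)
    (hLimit : ∀ κ : Ordinal.{u}, LInacc κ → ∀ θ < κ, ∃ ν, LCard ν ∧ θ < ν ∧ ν < κ)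
    (hAll : ∀ κ : Cardinal.{u}, ℵ₀ < κ → LInacc κ.ord) :
    ∀ l : Cardinal.{u}, ℵ₀ ≤ l → l.ord.cof < l →
      sInf { ν : Ordinal.{u} | LCard ν ∧ l.ord < ν } ≠ (Order.succ l).ord := by
  intro l hl _
  have hsucc : ℵ₀ < Order.succ l := lt_of_le_of_lt hl (Order.lt_succ l)
  have hord : l.ord < (Order.succ l).ord := (Cardinal.ord_lt_ord).2 (Order.lt_succ l)
  obtain ⟨ν, hν, hlν, hνs⟩ := hLimit _ (hAll _ hsucc) l.ord hord
  have : sInf { ν : Ordinal.{u} | LCard ν ∧ l.ord < ν } ≤ ν := csInf_le' ⟨hν, hlν⟩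
  exact ne_of_lt (lt_of_le_of_lt this hνs)
end
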